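/- arXiv:1410.5590 — 2 statements merged into one kernel-verified Lean document; each statement's English description precedes it below -/
import Mathlib

section
/- Given an inward pointing field of arrows F on A_{n+1} with r(F) repelling nodes, there are exactly 2^{r(F)} domino tilings T of A_n whose associated field of arrows equals F. -/
/-- A unit lattice square with lower-left corner `c` belongs to the Aztec diamond of
order `m` iff it intersects the open region `{(x,y) : |x|+|y| < m}`; equivalently the
distance-to-origin data of the cell satisfies this inequality. -/
def aztecCell (m : ℕ) (c : ℤ × ℤ) : Prop :=
  max c.1 (-c.1 - 1) + max c.2 (-c.2 - 1) < (m : ℤ)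

instance (m : ℕ) : DecidablePred (aztecCell m) := fun c => by
  unfold aztecCell; infer_instance

/-- Two unit lattice squares are adjacent (form a domino) iff they share a full edge. -/
def Adjacent (c d : ℤ × ℤ) : Prop :=
  (c.1 = d.1 ∧ |c.2 - d.2| = 1) ∨ (c.2 = d.2 ∧ |c.1 - d.1| = 1)

/-- A domino tiling of the Aztec diamond of order `m`, encoded as the involution
matching each unit square of the region with the other half of its domino,
and fixing everything outside the region. -/
def IsTiling (m : ℕ) (t : ℤ × ℤ → ℤ × ℤ) : Prop :=
  (∀ c, aztecCell m c → aztecCell m (t c) ∧ t (t c) = c ∧ Adjacent c (t c)) ∧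
  (∀ c, ¬ aztecCell m c → t c = c)

/-- `p` is a lattice point of the Aztec diamond of order `m` (a corner of one of its cells). -/
def aztecPoint (m : ℕ) (p : ℤ × ℤ) : Prop :=
  max (|p.1| - 1) 0 + max (|p.2| - 1) 0 < (m : ℤ)

instance (m : ℕ) : DecidablePred (aztecPoint m) := fun p => by
  unfold aztecPoint; infer_instance

/-- A node: a lattice point `(i,j)` of `A_{n+1}` with `i + j ≡ n (mod 2)`. -/
def IsNode (n : ℕ) (p : ℤ × ℤ) : Prop :=
  aztecPoint (n + 1) p ∧ (p.1 + p.2 - (n : ℤ)) % 2 = 0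

/-- An interior node: a node contained in `A_n`. -/
def InteriorNode (n : ℕ) (p : ℤ × ℤ) : Prop :=
  IsNode n p ∧ aztecPoint n p

/-- `p` is a corner of the unit square with lower-left corner `c`. -/
def SqCorner (c p : ℤ × ℤ) : Prop :=
  (p.1 = c.1 ∨ p.1 = c.1 + 1) ∧ (p.2 = c.2 ∨ p.2 = c.2 + 1)

instance (c p : ℤ × ℤ) : Decidable (SqCorner c p) := by
  unfold SqCorner; infer_instance

/-- The two corners of the lattice square `c` that are nodes; they are diagonally opposite. -/
def cellDiag (n : ℕ) (c : ℤ × ℤ) : (ℤ × ℤ) × (ℤ × ℤ) :=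
  if (c.1 + c.2 - (n : ℤ)) % 2 = 0 then (c, (c.1 + 1, c.2 + 1))
  else ((c.1 + 1, c.2), (c.1, c.2 + 1))

/-- `A` assigns to each lattice square the head of its arrow.  An interior node `N` is
attracting if all four adjacent arrows point towards `N`. -/
def Attracting (A : ℤ × ℤ → ℤ × ℤ) (N : ℤ × ℤ) : Prop :=
  A (N.1 - 1, N.2 - 1) = N ∧ A (N.1, N.2 - 1) = N ∧ A (N.1 - 1, N.2) = N ∧ A N = N

/-- An interior node `N` is repelling if all four adjacent arrows point away from `N`
(towards the opposite corner of the respective square). -/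
def Repelling (A : ℤ × ℤ → ℤ × ℤ) (N : ℤ × ℤ) : Prop :=
  A (N.1 - 1, N.2 - 1) = (N.1 - 1, N.2 - 1) ∧ A (N.1, N.2 - 1) = (N.1 + 1, N.2 - 1) ∧
  A (N.1 - 1, N.2) = (N.1 - 1, N.2 + 1) ∧ A N = (N.1 + 1, N.2 + 1)

/-- An interior node `N` is transient if any two collinear arrows adjacent to `N`
point in the same direction. -/
def Transient (A : ℤ × ℤ → ℤ × ℤ) (N : ℤ × ℤ) : Prop :=
  ((A (N.1 - 1, N.2 - 1) = N) ↔ (A N = (N.1 + 1, N.2 + 1))) ∧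
  ((A (N.1, N.2 - 1) = N) ↔ (A (N.1 - 1, N.2) = (N.1 - 1, N.2 + 1)))

/-- A field of arrows on `A_{n+1}`: in each lattice square an arrow joining its two
corner nodes, such that every interior node is attracting, repelling or transient. -/
def IsArrowField (n : ℕ) (A : ℤ × ℤ → ℤ × ℤ) : Prop :=
  (∀ c, aztecCell (n + 1) c → A c = (cellDiag n c).1 ∨ A c = (cellDiag n c).2) ∧
  (∀ N, InteriorNode n N → Attracting A N ∨ Repelling A N ∨ Transient A N)

/-- A boundary square: a lattice square of `A_{n+1}` not contained in `A_n`. -/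
def BoundaryCell (n : ℕ) (c : ℤ × ℤ) : Prop := aztecCell (n + 1) c ∧ ¬ aztecCell n c

/-- The field points outward: in every boundary square the arrow points towards the
corner node on the boundary of `A_{n+1}` (i.e. not an interior node). -/
def Outward (n : ℕ) (A : ℤ × ℤ → ℤ × ℤ) : Prop :=
  ∀ c, BoundaryCell n c → ¬ aztecPoint n (A c)

/-- The field points inward: in every boundary square the arrow points towards the
interior node. -/
def Inward (n : ℕ) (A : ℤ × ℤ → ℤ × ℤ) : Prop :=
  ∀ c, BoundaryCell n c → aztecPoint n (A c)

/-- The number of repelling interior nodes of a field of arrows. -/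
noncomputable def repCount (n : ℕ) (A : ℤ × ℤ → ℤ × ℤ) : ℕ :=
  Set.ncard {N : ℤ × ℤ | InteriorNode n N ∧ Repelling A N}

/-- The field of arrows associated to a tiling: in each lattice square the arrow points
towards the corner node of the domino containing that square (the node corner of the
square which is not a corner of its partner square). -/
def tilingArrow (n : ℕ) (t : ℤ × ℤ → ℤ × ℤ) (c : ℤ × ℤ) : ℤ × ℤ :=
  if SqCorner (t c) (cellDiag n c).1 then (cellDiag n c).2 else (cellDiag n c).1

/-- The field of arrows on `A_{n+1}` associated to a tiling of `A_n`: on squares of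
`A_n` as for tilings, and inward pointing arrows in all boundary squares. -/
def tilingArrowInner (n : ℕ) (t : ℤ × ℤ → ℤ × ℤ) (c : ℤ × ℤ) : ℤ × ℤ :=
  if aztecCell n c then tilingArrow n t c
  else if aztecPoint n (cellDiag n c).1 then (cellDiag n c).1 else (cellDiag n c).2

/-! In a tiling whose field is `A`, every square of `A_n` points away from the node corner it
shares with its domino partner, so its partner is one of the two squares adjacent to it around
the tail of its arrow. Around an attracting node no square has its tail there, around a transient
node exactly two adjacent squares do, and around a repelling node all four do; the inward condition
keeps all these squares inside `A_n`. So every domino is forced except around repelling nodes,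
where the four squares form either two horizontal or two vertical dominoes, independently. -/

def oppCorner (M c : ℤ × ℤ) : ℤ × ℤ := (2 * c.1 + 1 - M.1, 2 * c.2 + 1 - M.2)

/-- For a square `c` with corner `M`, the other square with corner `M` sharing a vertical edge
with `c`. -/
def hNeighbor (M c : ℤ × ℤ) : ℤ × ℤ := (2 * M.1 - 1 - c.1, c.2)

def vNeighbor (M c : ℤ × ℤ) : ℤ × ℤ := (c.1, 2 * M.2 - 1 - c.2)

def NodeCorner (n : ℕ) (c p : ℤ × ℤ) : Prop := SqCorner c p ∧ (p.1 + p.2 - n) % 2 = 0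

section Geometry

variable {n : ℕ} {c d p q M : ℤ × ℤ}

@[simp]
lemma oppCorner_oppCorner (M c : ℤ × ℤ) : oppCorner (oppCorner M c) c = M := by
  simp only [oppCorner]; ext <;> simp only <;> ring

lemma oppCorner_ne (M c : ℤ × ℤ) : oppCorner M c ≠ M := by
  simp only [oppCorner, ne_eq, Prod.ext_iff]; omega

lemma nodeCorner_oppCorner (h : NodeCorner n c p) : NodeCorner n c (oppCorner p c) := by
  unfold NodeCorner SqCorner oppCorner at *; omega

lemma NodeCorner.eq_or_eq_oppCorner (hp : NodeCorner n c p) (hq : NodeCorner n c q) :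
    q = p ∨ q = oppCorner p c := by
  unfold NodeCorner SqCorner at *; simp only [oppCorner, Prod.ext_iff]; omega

lemma nodeCorner_iff : NodeCorner n c p ↔ p = (cellDiag n c).1 ∨ p = (cellDiag n c).2 := by
  unfold NodeCorner SqCorner cellDiag
  split_ifs <;> simp only [Prod.ext_iff] <;> omega

lemma aztecCell.succ (h : aztecCell n c) : aztecCell (n + 1) c := by
  unfold aztecCell at *; push_cast; omega

lemma aztecPoint_of_sqCorner (hc : aztecCell n c) (hp : SqCorner c p) : aztecPoint n p := by
  unfold aztecCell SqCorner at *; unfold aztecPoint; simp only [abs_eq_max_neg]; omega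

lemma InteriorNode.aztecCell_succ (hM : InteriorNode n M) (hc : SqCorner c M) :
    aztecCell (n + 1) c := by
  obtain ⟨⟨-, hpar⟩, hM⟩ := hM
  unfold aztecPoint SqCorner at *; unfold aztecCell; simp only [abs_eq_max_neg] at hM
  push_cast; omega

lemma BoundaryCell.not_aztecPoint_oppCorner (hc : BoundaryCell n c) (hp : NodeCorner n c p)
    (hp' : aztecPoint n p) : ¬ aztecPoint n (oppCorner p c) := by
  obtain ⟨c₁, c₂⟩ := c; obtain ⟨p₁, p₂⟩ := p
  obtain ⟨⟨h₁ | h₁, h₂ | h₂⟩, hpar⟩ := hp <;>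
  · obtain ⟨hc₁, hc₂⟩ := hc
    unfold aztecCell at hc₁ hc₂; unfold aztecPoint at *
    simp only [oppCorner, abs_eq_max_neg] at *; push_cast at *
    subst h₁ h₂; omega

lemma sqCorner_self (M : ℤ × ℤ) : SqCorner M M := by simp [SqCorner]

lemma SqCorner.eq_or_eq_or_eq_or_eq (h : SqCorner c M) :
    c = (M.1 - 1, M.2 - 1) ∨ c = (M.1, M.2 - 1) ∨ c = (M.1 - 1, M.2) ∨ c = M := by
  unfold SqCorner at h; simp only [Prod.ext_iff]; omega

lemma SqCorner.eq_self_or_neighbor (h : SqCorner c M) :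
    c = M ∨ c = hNeighbor M M ∨ c = vNeighbor M M ∨ c = vNeighbor M (hNeighbor M M) := by
  unfold SqCorner at h; simp only [hNeighbor, vNeighbor, Prod.ext_iff]; omega

@[simp] lemma hNeighbor_hNeighbor (M c : ℤ × ℤ) : hNeighbor M (hNeighbor M c) = c := by
  simp only [hNeighbor]; ext <;> simp only; ring

@[simp] lemma vNeighbor_vNeighbor (M c : ℤ × ℤ) : vNeighbor M (vNeighbor M c) = c := by
  simp only [vNeighbor]; ext <;> simp only; ring

lemma hNeighbor_ne_vNeighbor (M c : ℤ × ℤ) : hNeighbor M c ≠ vNeighbor M c := by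
  simp only [hNeighbor, vNeighbor, ne_eq, Prod.ext_iff]; omega

lemma sqCorner_hNeighbor (h : SqCorner c M) : SqCorner (hNeighbor M c) M := by
  unfold SqCorner at *; simp only [hNeighbor]; omega

lemma sqCorner_vNeighbor (h : SqCorner c M) : SqCorner (vNeighbor M c) M := by
  unfold SqCorner at *; simp only [vNeighbor]; omega

lemma not_sqCorner_hNeighbor_oppCorner (M c : ℤ × ℤ) :
    ¬ SqCorner (hNeighbor M c) (oppCorner M c) := by
  simp only [SqCorner, hNeighbor, oppCorner]; omega

lemma not_sqCorner_vNeighbor_oppCorner (M c : ℤ × ℤ) :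
    ¬ SqCorner (vNeighbor M c) (oppCorner M c) := by
  simp only [SqCorner, vNeighbor, oppCorner]; omega

lemma adjacent_hNeighbor (h : SqCorner c M) : Adjacent c (hNeighbor M c) :=
  Or.inr ⟨rfl, by simp only [hNeighbor, abs_eq_max_neg]; unfold SqCorner at h; omega⟩

lemma adjacent_vNeighbor (h : SqCorner c M) : Adjacent c (vNeighbor M c) :=
  Or.inl ⟨rfl, by simp only [vNeighbor, abs_eq_max_neg]; unfold SqCorner at h; omega⟩

lemma adjacent_sqCorner_of_eq_neighbor (hc : SqCorner c M)
    (hd : d = hNeighbor M c ∨ d = vNeighbor M c) :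
    Adjacent c d ∧ SqCorner d M ∧ ¬ SqCorner d (oppCorner M c) := by
  rcases hd with rfl | rfl
  · exact ⟨adjacent_hNeighbor hc, sqCorner_hNeighbor hc, not_sqCorner_hNeighbor_oppCorner M c⟩
  · exact ⟨adjacent_vNeighbor hc, sqCorner_vNeighbor hc, not_sqCorner_vNeighbor_oppCorner M c⟩

lemma Adjacent.eq_hNeighbor_or_vNeighbor (hcd : Adjacent c d) (hc : SqCorner c M)
    (hd : SqCorner d M) : d = hNeighbor M c ∨ d = vNeighbor M c := by
  unfold Adjacent SqCorner at *; simp only [hNeighbor, vNeighbor, Prod.ext_iff]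
  simp only [abs_eq_max_neg] at hcd; omega

lemma Adjacent.eq_of_nodeCorner (hcd : Adjacent c d) (hp : NodeCorner n c p) (hpd : SqCorner d p)
    (hq : NodeCorner n d q) (hqc : SqCorner c q) : p = q := by
  unfold Adjacent NodeCorner SqCorner at *; simp only [abs_eq_max_neg] at hcd
  ext <;> omega

@[simp] lemma oppCorner_cellDiag_fst (n : ℕ) (c : ℤ × ℤ) :
    oppCorner (cellDiag n c).1 c = (cellDiag n c).2 := by
  unfold cellDiag oppCorner; split_ifs <;> ext <;> simp only <;> ring

@[simp] lemma oppCorner_cellDiag_snd (n : ℕ) (c : ℤ × ℤ) :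
    oppCorner (cellDiag n c).2 c = (cellDiag n c).1 := by
  rw [← oppCorner_cellDiag_fst, oppCorner_oppCorner]

lemma Adjacent.sqCorner_cellDiag (hcd : Adjacent c d) :
    SqCorner d (cellDiag n c).1 ∨ SqCorner d (cellDiag n c).2 := by
  unfold Adjacent at hcd; simp only [abs_eq_max_neg] at hcd
  unfold cellDiag SqCorner; split_ifs <;> dsimp only <;> omega

lemma sqCorner_oppCorner_tilingArrow {t : ℤ × ℤ → ℤ × ℤ} (hadj : Adjacent c (t c)) :
    SqCorner (t c) (oppCorner (tilingArrow n t c) c) := by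
  unfold tilingArrow
  split_ifs with h
  · rwa [oppCorner_cellDiag_snd]
  · rw [oppCorner_cellDiag_fst]; exact hadj.sqCorner_cellDiag.resolve_left h

lemma tilingArrow_eq_oppCorner {t : ℤ × ℤ → ℤ × ℤ} (hM : NodeCorner n c M)
    (h : SqCorner (t c) M) (h' : ¬ SqCorner (t c) (oppCorner M c)) :
    tilingArrow n t c = oppCorner M c := by
  unfold tilingArrow
  rcases nodeCorner_iff.1 hM with rfl | rfl
  · rw [if_pos h, oppCorner_cellDiag_fst]
  · rw [oppCorner_cellDiag_snd] at h' ⊢; rw [if_neg h']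

end Geometry

def arrowTail (A : ℤ × ℤ → ℤ × ℤ) (c : ℤ × ℤ) : ℤ × ℤ := oppCorner (A c) c

section ArrowField

variable {n : ℕ} {A : ℤ × ℤ → ℤ × ℤ} {c M : ℤ × ℤ}

lemma arrowTail_eq_iff : arrowTail A c = M ↔ A c = oppCorner M c := by
  constructor
  · rintro rfl; simp [arrowTail]
  · intro h; simp [arrowTail, h]

lemma Attracting.arrowTail_ne (h : Attracting A M) (hc : SqCorner c M) : arrowTail A c ≠ M := by
  have hAc : A c = M := by
    obtain ⟨h₁, h₂, h₃, h₄⟩ := h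
    rcases hc.eq_or_eq_or_eq_or_eq with rfl | rfl | rfl | rfl <;> assumption
  rw [arrowTail, hAc]; exact oppCorner_ne M c

lemma Repelling.arrowTail_eq (h : Repelling A M) (hc : SqCorner c M) : arrowTail A c = M := by
  obtain ⟨h₁, h₂, h₃, h₄⟩ := h
  rw [arrowTail_eq_iff]
  rcases hc.eq_or_eq_or_eq_or_eq with rfl | rfl | rfl | rfl <;>
    simp only [h₁, h₂, h₃, h₄, oppCorner, Prod.ext_iff] <;> omega

namespace IsArrowField

lemma nodeCorner_apply (hA : IsArrowField n A) (hc : aztecCell (n + 1) c) :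
    NodeCorner n c (A c) :=
  nodeCorner_iff.2 (hA.1 c hc)

lemma nodeCorner_arrowTail (hA : IsArrowField n A) (hc : aztecCell (n + 1) c) :
    NodeCorner n c (arrowTail A c) :=
  nodeCorner_oppCorner (hA.nodeCorner_apply hc)

lemma apply_eq_iff (hA : IsArrowField n A) (hc : aztecCell (n + 1) c) (hM : NodeCorner n c M) :
    A c = M ↔ arrowTail A c ≠ M := by
  rw [ne_eq, arrowTail_eq_iff]
  rcases (hM.eq_or_eq_oppCorner (hA.nodeCorner_apply hc)) with h | h <;> rw [h]
  · simpa using (oppCorner_ne M c).symm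
  · simpa using oppCorner_ne M c

lemma interiorNode_arrowTail (hA : IsArrowField n A) (hc : aztecCell n c) :
    InteriorNode n (arrowTail A c) := by
  obtain ⟨hcorner, hpar⟩ := hA.nodeCorner_arrowTail hc.succ
  have hpt := aztecPoint_of_sqCorner hc hcorner
  refine ⟨⟨?_, hpar⟩, hpt⟩
  unfold aztecPoint at *; push_cast; omega

lemma transient_of_not_repelling (hA : IsArrowField n A) (hc : aztecCell n c)
    (hrep : ¬ Repelling A (arrowTail A c)) :
    Transient A (arrowTail A c) := by
  have hcM := (hA.nodeCorner_arrowTail hc.succ).1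
  rcases hA.2 _ (hA.interiorNode_arrowTail hc) with hatt | hrep' | htr
  · exact absurd rfl (hatt.arrowTail_ne hcM)
  · exact absurd hrep' hrep
  · exact htr

/-- Around a transient node the squares with their tail there form a domino. -/
lemma arrowTail_hNeighbor_eq_iff (hA : IsArrowField n A) (hM : InteriorNode n M)
    (htr : Transient A M) (hc : SqCorner c M) :
    arrowTail A (hNeighbor M c) = M ↔ arrowTail A (vNeighbor M c) ≠ M := by
  have away_iff (d q : ℤ × ℤ) (hq : q = oppCorner M d) : A d = q ↔ arrowTail A d = M := by
    rw [hq, arrowTail_eq_iff]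
  have toward_iff (d : ℤ × ℤ) (hd : SqCorner d M) : A d = M ↔ arrowTail A d ≠ M :=
    hA.apply_eq_iff (hM.aztecCell_succ hd) ⟨hd, hM.1.2⟩
  obtain ⟨m₁, m₂⟩ := M
  obtain ⟨t₁, t₂⟩ := htr
  rw [toward_iff _ (by simp [SqCorner]), away_iff _ _ (by simp only [oppCorner]; ext <;> ring)]
    at t₁ t₂
  have e₁ : 2 * m₁ - 1 - (m₁ - 1) = m₁ := by ring
  have e₂ : 2 * m₁ - 1 - m₁ = m₁ - 1 := by ring
  have e₃ : 2 * m₂ - 1 - (m₂ - 1) = m₂ := by ring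
  have e₄ : 2 * m₂ - 1 - m₂ = m₂ - 1 := by ring
  rcases hc.eq_or_eq_or_eq_or_eq with rfl | rfl | rfl | rfl <;>
    simp only [hNeighbor, vNeighbor, e₁, e₂, e₃, e₄] <;> tauto

end IsArrowField

namespace Inward

lemma not_aztecPoint_arrowTail (hin : Inward n A) (hA : IsArrowField n A)
    (hc : BoundaryCell n c) : ¬ aztecPoint n (arrowTail A c) :=
  hc.not_aztecPoint_oppCorner (hA.nodeCorner_apply hc.1) (hin c hc)

lemma aztecCell_of_arrowTail_eq (hin : Inward n A) (hA : IsArrowField n A)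
    (hM : InteriorNode n M) (hc : SqCorner c M) (h : arrowTail A c = M) : aztecCell n c := by
  by_contra hc'
  exact hin.not_aztecPoint_arrowTail hA ⟨hM.aztecCell_succ hc, hc'⟩ (h ▸ hM.2)

lemma tilingArrowInner_eq (hin : Inward n A) (hA : IsArrowField n A) (hc : BoundaryCell n c)
    (t : ℤ × ℤ → ℤ × ℤ) : tilingArrowInner n t c = A c := by
  have hAc := hin c hc
  have hd := hc.not_aztecPoint_oppCorner (nodeCorner_iff.2 (Or.inl rfl))
  rw [oppCorner_cellDiag_fst] at hd
  rw [tilingArrowInner, if_neg hc.2]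
  rcases hA.1 c hc.1 with h | h <;> rw [h] at hAc ⊢
  · rw [if_pos hAc]
  · rw [if_neg fun hp => hd hp hAc]

end Inward

end ArrowField

def repellingNodes (n : ℕ) (A : ℤ × ℤ → ℤ × ℤ) : Set (ℤ × ℤ) :=
  {N | InteriorNode n N ∧ Repelling A N}

def IsTilingWithField (n : ℕ) (A t : ℤ × ℤ → ℤ × ℤ) : Prop :=
  IsTiling n t ∧ ∀ c, aztecCell (n + 1) c → tilingArrowInner n t c = A c

namespace IsTilingWithField

variable {n : ℕ} {A t : ℤ × ℤ → ℤ × ℤ} {c d M : ℤ × ℤ}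

lemma tilingArrow_eq (ht : IsTilingWithField n A t) (hc : aztecCell n c) :
    tilingArrow n t c = A c := by
  simpa [tilingArrowInner, hc] using ht.2 c hc.succ

lemma sqCorner_arrowTail (ht : IsTilingWithField n A t) (hc : aztecCell n c) :
    SqCorner (t c) (arrowTail A c) := by
  rw [arrowTail, ← ht.tilingArrow_eq hc]
  exact sqCorner_oppCorner_tilingArrow (ht.1.1 c hc).2.2

lemma apply_eq_or (ht : IsTilingWithField n A t) (hA : IsArrowField n A) (hc : aztecCell n c) :
    t c = hNeighbor (arrowTail A c) c ∨ t c = vNeighbor (arrowTail A c) c :=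
  (ht.1.1 c hc).2.2.eq_hNeighbor_or_vNeighbor (hA.nodeCorner_arrowTail hc.succ).1
    (ht.sqCorner_arrowTail hc)

lemma arrowTail_apply (ht : IsTilingWithField n A t) (hA : IsArrowField n A)
    (hc : aztecCell n c) : arrowTail A (t c) = arrowTail A c := by
  obtain ⟨htc, htt, hadj⟩ := ht.1.1 c hc
  have hcorner := ht.sqCorner_arrowTail htc
  rw [htt] at hcorner
  exact (hadj.eq_of_nodeCorner (hA.nodeCorner_arrowTail hc.succ) (ht.sqCorner_arrowTail hc)
    (hA.nodeCorner_arrowTail htc.succ) hcorner).symm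

lemma apply_hNeighbor_eq_iff (ht : IsTilingWithField n A t) (hd : aztecCell n d)
    (hd' : aztecCell n (hNeighbor M d)) :
    t (hNeighbor M d) = hNeighbor M (hNeighbor M d) ↔ t d = hNeighbor M d := by
  rw [hNeighbor_hNeighbor]
  constructor
  · intro h
    have h' := (ht.1.1 _ hd').2.1
    rwa [h] at h'
  · intro h
    have h' := (ht.1.1 d hd).2.1
    rwa [h] at h'

lemma apply_vNeighbor_eq_iff (ht : IsTilingWithField n A t) (hA : IsArrowField n A)
    (hd : aztecCell n d) (hd' : aztecCell n (vNeighbor M d)) (htail : arrowTail A d = M)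
    (htail' : arrowTail A (vNeighbor M d) = M) :
    t (vNeighbor M d) = hNeighbor M (vNeighbor M d) ↔ t d = hNeighbor M d := by
  have hv := htail ▸ ht.apply_eq_or hA hd
  have hv' := htail' ▸ ht.apply_eq_or hA hd'
  rw [vNeighbor_vNeighbor] at hv'
  constructor
  · intro h
    refine hv.resolve_right fun h' => hNeighbor_ne_vNeighbor M (vNeighbor M d) ?_
    have h'' := (ht.1.1 d hd).2.1
    rw [h', h] at h''
    rw [h'', vNeighbor_vNeighbor]
  · intro h
    refine hv'.resolve_right fun h' => hNeighbor_ne_vNeighbor M d ?_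
    have h'' := (ht.1.1 _ hd').2.1
    rwa [h', h] at h''

/-- The two dominoes covering the squares around a repelling node are parallel. -/
lemma apply_eq_hNeighbor_iff (ht : IsTilingWithField n A t) (hA : IsArrowField n A)
    (hin : Inward n A) (hM : M ∈ repellingNodes n A) (hc : SqCorner c M) :
    t c = hNeighbor M c ↔ t M = hNeighbor M M := by
  obtain ⟨hMi, hrep⟩ := hM
  have mem (d : ℤ × ℤ) (hd : SqCorner d M) : aztecCell n d :=
    hin.aztecCell_of_arrowTail_eq hA hMi hd (hrep.arrowTail_eq hd)
  have hMM := sqCorner_self M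
  have hiff (d : ℤ × ℤ) (hd : SqCorner d M) :=
    ht.apply_hNeighbor_eq_iff (mem d hd) (mem _ (sqCorner_hNeighbor hd))
  have viff (d : ℤ × ℤ) (hd : SqCorner d M) :=
    ht.apply_vNeighbor_eq_iff hA (mem d hd) (mem _ (sqCorner_vNeighbor hd))
      (hrep.arrowTail_eq hd) (hrep.arrowTail_eq (sqCorner_vNeighbor hd))
  rcases hc.eq_self_or_neighbor with rfl | rfl | rfl | rfl
  · rfl
  · exact hiff M hMM
  · exact viff M hMM
  · exact (viff _ (sqCorner_hNeighbor hMM)).trans (hiff M hMM)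

end IsTilingWithField

open Classical in
/-- At a transient node the domino of a square is forced; at a repelling node `f` decides whether
the four squares around it form two horizontal (`true`) or two vertical dominoes. -/
noncomputable def choiceTiling (n : ℕ) (A : ℤ × ℤ → ℤ × ℤ) (f : ℤ × ℤ → Bool) (c : ℤ × ℤ) :
    ℤ × ℤ :=
  if aztecCell n c then
    if Repelling A (arrowTail A c) then
      if f (arrowTail A c) then hNeighbor (arrowTail A c) c else vNeighbor (arrowTail A c) c
    else if arrowTail A (hNeighbor (arrowTail A c) c) = arrowTail A c then
      hNeighbor (arrowTail A c) c
    else vNeighbor (arrowTail A c) c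
  else c

section ChoiceTiling

variable {n : ℕ} {A : ℤ × ℤ → ℤ × ℤ} {f : ℤ × ℤ → Bool} {c M : ℤ × ℤ}

lemma choiceTiling_of_not_aztecCell (hc : ¬ aztecCell n c) : choiceTiling n A f c = c := by
  simp [choiceTiling, hc]

lemma choiceTiling_of_repelling (hc : aztecCell n c) (hM : arrowTail A c = M)
    (hrep : Repelling A M) :
    choiceTiling n A f c = if f M then hNeighbor M c else vNeighbor M c := by
  subst hM; simp [choiceTiling, hc, hrep]

lemma choiceTiling_of_not_repelling (hc : aztecCell n c) (hM : arrowTail A c = M)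
    (hrep : ¬ Repelling A M) :
    choiceTiling n A f c =
      if arrowTail A (hNeighbor M c) = M then hNeighbor M c else vNeighbor M c := by
  subst hM; simp [choiceTiling, hc, hrep]

lemma choiceTiling_spec (hA : IsArrowField n A) (hin : Inward n A) (hc : aztecCell n c)
    (hM : arrowTail A c = M) :
    (choiceTiling n A f c = hNeighbor M c ∨ choiceTiling n A f c = vNeighbor M c) ∧
      arrowTail A (choiceTiling n A f c) = M ∧
      choiceTiling n A f (choiceTiling n A f c) = c := by
  have hMi : InteriorNode n M := hM ▸ hA.interiorNode_arrowTail hc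
  have hcM : SqCorner c M := hM ▸ (hA.nodeCorner_arrowTail hc.succ).1
  have mem (d : ℤ × ℤ) (hd : SqCorner d M) (h : arrowTail A d = M) : aztecCell n d :=
    hin.aztecCell_of_arrowTail_eq hA hMi hd h
  by_cases hrep : Repelling A M
  · have hh := hrep.arrowTail_eq (sqCorner_hNeighbor hcM)
    have hv := hrep.arrowTail_eq (sqCorner_vNeighbor hcM)
    rw [choiceTiling_of_repelling hc hM hrep]
    split_ifs with hf
    · refine ⟨Or.inl rfl, hh, ?_⟩
      rw [choiceTiling_of_repelling (mem _ (sqCorner_hNeighbor hcM) hh) hh hrep, if_pos hf,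
        hNeighbor_hNeighbor]
    · refine ⟨Or.inr rfl, hv, ?_⟩
      rw [choiceTiling_of_repelling (mem _ (sqCorner_vNeighbor hcM) hv) hv hrep, if_neg hf,
        vNeighbor_vNeighbor]
  · have htr : Transient A M := hM ▸ hA.transient_of_not_repelling hc (hM ▸ hrep)
    rw [choiceTiling_of_not_repelling hc hM hrep]
    by_cases hh : arrowTail A (hNeighbor M c) = M
    · rw [if_pos hh]
      refine ⟨Or.inl rfl, hh, ?_⟩
      rw [choiceTiling_of_not_repelling (mem _ (sqCorner_hNeighbor hcM) hh) hh hrep,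
        hNeighbor_hNeighbor, if_pos hM]
    · have hv : arrowTail A (vNeighbor M c) = M :=
        not_not.1 (mt (hA.arrowTail_hNeighbor_eq_iff hMi htr hcM).2 hh)
      have hhv : arrowTail A (hNeighbor M (vNeighbor M c)) ≠ M := by
        rw [ne_eq, hA.arrowTail_hNeighbor_eq_iff hMi htr (sqCorner_vNeighbor hcM),
          vNeighbor_vNeighbor, not_not]
        exact hM
      rw [if_neg hh]
      refine ⟨Or.inr rfl, hv, ?_⟩
      rw [choiceTiling_of_not_repelling (mem _ (sqCorner_vNeighbor hcM) hv) hv hrep, if_neg hhv,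
        vNeighbor_vNeighbor]

lemma isTilingWithField_choiceTiling (hA : IsArrowField n A) (hin : Inward n A)
    (f : ℤ × ℤ → Bool) : IsTilingWithField n A (choiceTiling n A f) := by
  refine ⟨⟨fun c hc => ?_, fun c hc => choiceTiling_of_not_aztecCell hc⟩, fun c hc => ?_⟩
  · obtain ⟨hnbr, htail, hinv⟩ := choiceTiling_spec hA hin hc rfl (f := f)
    obtain ⟨hadj, hcorner, -⟩ :=
      adjacent_sqCorner_of_eq_neighbor (hA.nodeCorner_arrowTail hc.succ).1 hnbr
    exact ⟨hin.aztecCell_of_arrowTail_eq hA (hA.interiorNode_arrowTail hc) hcorner htail,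
      hinv, hadj⟩
  · by_cases hc' : aztecCell n c
    · obtain ⟨hnbr, -, -⟩ := choiceTiling_spec hA hin hc' rfl (f := f)
      obtain ⟨-, hcorner, hopp⟩ :=
        adjacent_sqCorner_of_eq_neighbor (hA.nodeCorner_arrowTail hc).1 hnbr
      rw [tilingArrowInner, if_pos hc', (arrowTail_eq_iff (A := A) (c := c)).1 rfl]
      exact tilingArrow_eq_oppCorner (hA.nodeCorner_arrowTail hc) hcorner hopp
    · exact hin.tilingArrowInner_eq hA ⟨hc, hc'⟩ _

end ChoiceTiling

section Counting

variable {n : ℕ} {A : ℤ × ℤ → ℤ × ℤ} {f : ℤ × ℤ → Bool}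

lemma IsTilingWithField.eq_choiceTiling {t : ℤ × ℤ → ℤ × ℤ} (ht : IsTilingWithField n A t)
    (hA : IsArrowField n A) (hin : Inward n A)
    (hf : ∀ M ∈ repellingNodes n A, f M = true ↔ t M = hNeighbor M M) :
    t = choiceTiling n A f := by
  funext c
  by_cases hc : aztecCell n c
  swap
  · rw [ht.1.2 c hc, choiceTiling_of_not_aztecCell hc]
  obtain ⟨M, hM⟩ : ∃ M, arrowTail A c = M := ⟨_, rfl⟩
  have hMi : InteriorNode n M := hM ▸ hA.interiorNode_arrowTail hc
  have hcM : SqCorner c M := hM ▸ (hA.nodeCorner_arrowTail hc.succ).1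
  have hpartner := hM ▸ ht.apply_eq_or hA hc
  by_cases hrep : Repelling A M
  · have key := (ht.apply_eq_hNeighbor_iff hA hin ⟨hMi, hrep⟩ hcM).trans (hf M ⟨hMi, hrep⟩).symm
    rw [choiceTiling_of_repelling hc hM hrep]
    split_ifs with hfM
    · exact key.2 hfM
    · exact hpartner.resolve_left fun h => hfM (key.1 h)
  · have htr : Transient A M := hM ▸ hA.transient_of_not_repelling hc (hM ▸ hrep)
    have htail : arrowTail A (t c) = M := hM ▸ ht.arrowTail_apply hA hc
    rw [choiceTiling_of_not_repelling hc hM hrep]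
    rcases hpartner with h | h
    · rw [if_pos (h ▸ htail), h]
    · have hh : arrowTail A (hNeighbor M c) ≠ M := by
        rw [ne_eq, hA.arrowTail_hNeighbor_eq_iff hMi htr hcM, not_not, ← h]
        exact htail
      rw [if_neg hh, h]

lemma choiceTiling_self_eq_hNeighbor_iff (hA : IsArrowField n A) (hin : Inward n A) {M : ℤ × ℤ}
    (hM : M ∈ repellingNodes n A) : choiceTiling n A f M = hNeighbor M M ↔ f M = true := by
  have htail := hM.2.arrowTail_eq (sqCorner_self M)
  rw [choiceTiling_of_repelling (hin.aztecCell_of_arrowTail_eq hA hM.1 (sqCorner_self M) htail)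
    htail hM.2]
  cases f M <;> simp [(hNeighbor_ne_vNeighbor M M).symm]

lemma finite_setOf_aztecPoint (m : ℕ) : {p : ℤ × ℤ | aztecPoint m p}.Finite := by
  refine (Set.finite_Icc (-(m : ℤ) - 1, -(m : ℤ) - 1) ((m : ℤ) + 1, (m : ℤ) + 1)).subset ?_
  rintro ⟨p₁, p₂⟩ hp
  simp only [Set.mem_ofPred_eq, aztecPoint, abs_eq_max_neg] at hp
  simp only [Set.mem_Icc, Prod.mk_le_mk]
  omega

open Function in
noncomputable def tilingEquivChoice (hA : IsArrowField n A) (hin : Inward n A) :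
    {t // IsTilingWithField n A t} ≃ (repellingNodes n A → Bool) where
  toFun t M := decide (t.1 M = hNeighbor M M)
  invFun f := ⟨choiceTiling n A (extend Subtype.val f fun _ => true),
    isTilingWithField_choiceTiling hA hin _⟩
  left_inv t := Subtype.ext <| (t.2.eq_choiceTiling hA hin fun M hM => by
    change extend Subtype.val _ _ (Subtype.val (⟨M, hM⟩ : repellingNodes n A)) = true ↔ _
    rw [Subtype.val_injective.extend_apply, decide_eq_true_iff]).symm
  right_inv f := funext fun M => by
    simp [choiceTiling_self_eq_hNeighbor_iff hA hin M.2]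

end Counting

theorem tilings_with_inward_field_general (n : ℕ) (A : ℤ × ℤ → ℤ × ℤ)
    (hA : IsArrowField n A) (hin : Inward n A) :
    Nat.card {t : ℤ × ℤ → ℤ × ℤ // IsTiling n t ∧
        ∀ c, aztecCell (n + 1) c → tilingArrowInner n t c = A c} = 2 ^ repCount n A := by
  have : Finite (repellingNodes n A) :=
    ((finite_setOf_aztecPoint n).subset fun _ hN => hN.1.2).to_subtype
  refine (Nat.card_congr (tilingEquivChoice hA hin)).trans ?_
  rw [Nat.card_fun, Nat.card_eq_fintype_card, Fintype.card_bool, Nat.card_coe_set_eq, repCount,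
    repellingNodes]

/-- Given an inward pointing field of arrows `A` on `A_{n+1}`, there are exactly
`2 ^ r(A)` domino tilings of `A_n` whose associated field of arrows equals `A`. -/
theorem tilings_with_inward_field (n : ℕ) (hn : 1 ≤ n) (A : ℤ × ℤ → ℤ × ℤ)
    (hA : IsArrowField n A) (hin : Inward n A) :
    Nat.card {t : ℤ × ℤ → ℤ × ℤ // IsTiling n t ∧
        ∀ c, aztecCell (n + 1) c → tilingArrowInner n t c = A c} = 2 ^ repCount n A :=
  tilings_with_inward_field_general n A hA hin
end

section
/- The map T ↦ F(T) from domino tilings of A_{n+1} to outward pointing fields of arrows on A_{n+1} is surjective: every outward pointing field of arrows arises from some tiling of A_{n+1}. -/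
section Aux

/-! ### Auxiliary machinery for `outward_field_surjective` -/

/-- The interior node of a cell away from which its arrow points. -/
def pnode (n : ℕ) (A : ℤ × ℤ → ℤ × ℤ) (c : ℤ × ℤ) : ℤ × ℤ :=
  if A c = (cellDiag n c).2 then (cellDiag n c).1 else (cellDiag n c).2

/-- The horizontal neighbour of `c` across the node `P`. -/
def hpart (P c : ℤ × ℤ) : ℤ × ℤ := (2 * P.1 - 1 - c.1, c.2)

/-- The vertical neighbour of `c` across the node `P`. -/
def vpart (P c : ℤ × ℤ) : ℤ × ℤ := (c.1, 2 * P.2 - 1 - c.2)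

/-- The candidate tiling obtained from an arrow field. -/
def tmap (n : ℕ) (A : ℤ × ℤ → ℤ × ℤ) (c : ℤ × ℤ) : ℤ × ℤ :=
  if aztecCell (n + 1) c then
    (if A (hpart (pnode n A c) c) = pnode n A c then vpart (pnode n A c) c
     else hpart (pnode n A c) c)
  else c

lemma aztecPoint_iff (m : ℕ) (x y : ℤ) : aztecPoint m (x, y) ↔
    ((0:ℤ) < m ∧ x - 1 < m ∧ -x - 1 < m ∧ y - 1 < m ∧ -y - 1 < m ∧
     x + y - 2 < m ∧ x - y - 2 < m ∧ -x + y - 2 < m ∧ -x - y - 2 < m) := by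
  have hx := abs_choice x; have hy := abs_choice y
  have hx0 := abs_nonneg x; have hy0 := abs_nonneg y
  simp only [aztecPoint, max_def]
  split_ifs <;> omega

lemma aztecCell_iff (m : ℕ) (x y : ℤ) : aztecCell m (x, y) ↔
    (x + y < m ∧ x - y - 1 < m ∧ -x + y - 1 < m ∧ -x - y - 2 < m) := by
  simp only [aztecCell, max_def]
  split_ifs <;> omega

lemma diag_ne (n : ℕ) (c : ℤ × ℤ) : (cellDiag n c).1 ≠ (cellDiag n c).2 := by
  unfold cellDiag; split_ifs <;> simp [Prod.ext_iff] <;> omega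

lemma diag_parity (n : ℕ) (c : ℤ × ℤ) :
    ((cellDiag n c).1.1 + (cellDiag n c).1.2 - n) % 2 = 0 ∧
    ((cellDiag n c).2.1 + (cellDiag n c).2.2 - n) % 2 = 0 := by
  unfold cellDiag; split_ifs with h <;> simp <;> omega

lemma diag_corner (n : ℕ) (c : ℤ × ℤ) :
    SqCorner c (cellDiag n c).1 ∧ SqCorner c (cellDiag n c).2 := by
  unfold cellDiag SqCorner; split_ifs <;> simp

lemma diag_sum (n : ℕ) (c : ℤ × ℤ) :
    (cellDiag n c).1.1 + (cellDiag n c).2.1 = 2 * c.1 + 1 ∧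
    (cellDiag n c).1.2 + (cellDiag n c).2.2 = 2 * c.2 + 1 := by
  unfold cellDiag; split_ifs <;> simp <;> omega

lemma pnode_mem (n : ℕ) (A : ℤ × ℤ → ℤ × ℤ) (c : ℤ × ℤ) :
    pnode n A c = (cellDiag n c).1 ∨ pnode n A c = (cellDiag n c).2 := by
  unfold pnode; split_ifs <;> simp

lemma pnode_ne (n : ℕ) (A : ℤ × ℤ → ℤ × ℤ) (c : ℤ × ℤ)
    (hAc : A c = (cellDiag n c).1 ∨ A c = (cellDiag n c).2) :
    A c ≠ pnode n A c := by
  unfold pnode; split_ifs with h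
  · rw [h]; exact (diag_ne n c).symm
  · rcases hAc with h1 | h1
    · rw [h1]; exact diag_ne n c
    · exact absurd h1 h

lemma pnode_eq (n : ℕ) (A : ℤ × ℤ → ℤ × ℤ) (c P : ℤ × ℤ)
    (hAc : A c = (cellDiag n c).1 ∨ A c = (cellDiag n c).2)
    (hP : P = (cellDiag n c).1 ∨ P = (cellDiag n c).2)
    (hne : A c ≠ P) : pnode n A c = P := by
  unfold pnode; split_ifs with h
  · rcases hP with h1 | h1
    · exact h1.symm
    · exact absurd (h.trans h1.symm) hne
  · rcases hAc with h1 | h1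
    · rcases hP with h2 | h2
      · exact absurd (h1.trans h2.symm) hne
      · exact h2.symm
    · exact absurd h1 h

lemma cell_around (n : ℕ) (P d : ℤ × ℤ) (hpt : aztecPoint n P)
    (hpar : (P.1 + P.2 - (n : ℤ)) % 2 = 0)
    (h1 : d.1 = P.1 - 1 ∨ d.1 = P.1) (h2 : d.2 = P.2 - 1 ∨ d.2 = P.2) :
    aztecCell (n + 1) d := by
  obtain ⟨x, y⟩ := d; obtain ⟨p, q⟩ := P
  simp only [aztecCell_iff, aztecPoint_iff] at *
  push_cast at *; omega

lemma corner_interior (n : ℕ) (c p : ℤ × ℤ) (h : aztecCell n c)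
    (h1 : p.1 = c.1 ∨ p.1 = c.1 + 1) (h2 : p.2 = c.2 ∨ p.2 = c.2 + 1) :
    aztecPoint n p := by
  obtain ⟨x, y⟩ := p; obtain ⟨a, b⟩ := c
  simp only [aztecCell_iff, aztecPoint_iff] at *
  omega

lemma diag_interior_exists (n : ℕ) (hn : 1 ≤ n) (c : ℤ × ℤ) (h : aztecCell (n + 1) c) :
    aztecPoint n (cellDiag n c).1 ∨ aztecPoint n (cellDiag n c).2 := by
  obtain ⟨a, b⟩ := c
  unfold cellDiag
  split_ifs with hpar <;>
  · simp only [aztecCell_iff, aztecPoint_iff] at *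
    push_cast at *; omega

lemma mem_diag (n : ℕ) (P d : ℤ × ℤ)
    (hpar : (P.1 + P.2 - (n : ℤ)) % 2 = 0)
    (h1 : d.1 = P.1 - 1 ∨ d.1 = P.1) (h2 : d.2 = P.2 - 1 ∨ d.2 = P.2) :
    P = (cellDiag n d).1 ∨ P = (cellDiag n d).2 := by
  obtain ⟨x, y⟩ := d; obtain ⟨p, q⟩ := P
  simp only at h1 h2 hpar
  unfold cellDiag
  split_ifs with h <;> simp only [Prod.mk.injEq] <;> omega

lemma aztecPoint_mono (n : ℕ) (p : ℤ × ℤ) (h : aztecPoint n p) :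
    aztecPoint (n + 1) p := by
  obtain ⟨x, y⟩ := p
  simp only [aztecPoint_iff] at *
  push_cast at *; omega

lemma pnode_interior (n : ℕ) (hn : 1 ≤ n) (A : ℤ × ℤ → ℤ × ℤ)
    (hA : IsArrowField n A) (hout : Outward n A) (c : ℤ × ℤ)
    (hc : aztecCell (n + 1) c) : aztecPoint n (pnode n A c) := by
  by_cases h : aztecCell n c
  · rcases pnode_mem n A c with h1 | h1 <;> rw [h1]
    · exact corner_interior n c _ h (diag_corner n c).1.1 (diag_corner n c).1.2
    · exact corner_interior n c _ h (diag_corner n c).2.1 (diag_corner n c).2.2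
  · have hAP := hout c ⟨hc, h⟩
    have hone := diag_interior_exists n hn c hc
    have hAc := hA.1 c hc
    have hne := pnode_ne n A c hAc
    rcases pnode_mem n A c with h1 | h1 <;> rw [h1] <;> rcases hAc with h2 | h2
    · exact absurd (h2.trans h1.symm) hne
    · rcases hone with h3 | h3
      · exact h3
      · rw [← h2] at h3; exact absurd h3 hAP
    · rcases hone with h3 | h3
      · rw [← h2] at h3; exact absurd h3 hAP
      · exact h3
    · exact absurd (h2.trans h1.symm) hne

lemma pnode_parity (n : ℕ) (A : ℤ × ℤ → ℤ × ℤ) (c : ℤ × ℤ) :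
    ((pnode n A c).1 + (pnode n A c).2 - (n : ℤ)) % 2 = 0 := by
  rcases pnode_mem n A c with h | h <;> rw [h]
  · exact (diag_parity n c).1
  · exact (diag_parity n c).2

lemma pnode_interiorNode (n : ℕ) (hn : 1 ≤ n) (A : ℤ × ℤ → ℤ × ℤ)
    (hA : IsArrowField n A) (hout : Outward n A) (c : ℤ × ℤ)
    (hc : aztecCell (n + 1) c) : InteriorNode n (pnode n A c) := by
  have hpt := pnode_interior n hn A hA hout c hc
  refine ⟨⟨aztecPoint_mono n _ hpt, pnode_parity n A c⟩, hpt⟩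

lemma around (n : ℕ) (A : ℤ × ℤ → ℤ × ℤ) (hA : IsArrowField n A)
    (P : ℤ × ℤ) (hP : InteriorNode n P) :
    (A (P.1 - 1, P.2 - 1) = (P.1 - 1, P.2 - 1) ∨ A (P.1 - 1, P.2 - 1) = P) ∧
    (A (P.1, P.2 - 1) = (P.1 + 1, P.2 - 1) ∨ A (P.1, P.2 - 1) = P) ∧
    (A (P.1 - 1, P.2) = (P.1 - 1, P.2 + 1) ∨ A (P.1 - 1, P.2) = P) ∧
    (A (P.1, P.2) = (P.1, P.2) ∨ A (P.1, P.2) = (P.1 + 1, P.2 + 1)) := by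
  obtain ⟨⟨hpt1, hpar⟩, hpt⟩ := hP
  have hLL := hA.1 (P.1 - 1, P.2 - 1)
    (cell_around n P _ hpt hpar (Or.inl rfl) (Or.inl rfl))
  have hLR := hA.1 (P.1, P.2 - 1)
    (cell_around n P _ hpt hpar (Or.inr rfl) (Or.inl rfl))
  have hUL := hA.1 (P.1 - 1, P.2)
    (cell_around n P _ hpt hpar (Or.inl rfl) (Or.inr rfl))
  have hUR := hA.1 (P.1, P.2)
    (cell_around n P _ hpt hpar (Or.inr rfl) (Or.inr rfl))
  have eLL : cellDiag n (P.1 - 1, P.2 - 1) = ((P.1 - 1, P.2 - 1), P) := by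
    unfold cellDiag; rw [if_pos (by simp; omega)]
    simp [Prod.ext_iff] <;> omega
  have eLR : cellDiag n (P.1, P.2 - 1) = ((P.1 + 1, P.2 - 1), P) := by
    unfold cellDiag; rw [if_neg (by simp; omega)]
    simp [Prod.ext_iff] <;> omega
  have eUL : cellDiag n (P.1 - 1, P.2) = (P, (P.1 - 1, P.2 + 1)) := by
    unfold cellDiag; rw [if_neg (by simp; omega)]
    simp [Prod.ext_iff] <;> omega
  have eUR : cellDiag n (P.1, P.2) = ((P.1, P.2), (P.1 + 1, P.2 + 1)) := by
    unfold cellDiag; rw [if_pos (by simp; omega)]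
  rw [eLL] at hLL; rw [eLR] at hLR; rw [eUL] at hUL; rw [eUR] at hUR
  exact ⟨hLL, hLR, hUL.symm, hUR⟩
lemma nodeCases (n : ℕ) (A : ℤ × ℤ → ℤ × ℤ) (hA : IsArrowField n A)
    (p q : ℤ) (hP : InteriorNode n (p, q)) :
    (A (p - 1, q - 1) = (p, q) ∧ A (p, q - 1) = (p, q) ∧
     A (p - 1, q) = (p, q) ∧ A (p, q) = (p, q)) ∨
    (A (p - 1, q - 1) ≠ (p, q) ∧ A (p, q - 1) ≠ (p, q) ∧
     A (p - 1, q) ≠ (p, q) ∧ A (p, q) ≠ (p, q)) ∨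
    ((A (p - 1, q - 1) = (p, q) ↔ A (p, q) ≠ (p, q)) ∧
     (A (p, q - 1) = (p, q) ↔ A (p - 1, q) ≠ (p, q))) := by
  obtain ⟨aLL, aLR, aUL, aUR⟩ := around n A hA (p, q) hP
  have hnode := hA.2 (p, q) hP
  have n1 : ((p - 1 : ℤ), (q - 1 : ℤ)) ≠ (p, q) := by
    intro h; rw [Prod.ext_iff] at h; omega
  have n2 : ((p + 1 : ℤ), (q - 1 : ℤ)) ≠ (p, q) := by
    intro h; rw [Prod.ext_iff] at h; omega
  have n3 : ((p - 1 : ℤ), (q + 1 : ℤ)) ≠ (p, q) := by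
    intro h; rw [Prod.ext_iff] at h; omega
  have n4 : ((p + 1 : ℤ), (q + 1 : ℤ)) ≠ (p, q) := by
    intro h; rw [Prod.ext_iff] at h; omega
  simp only at aLL aLR aUL aUR
  rcases hnode with hat | hrep | htr
  · obtain ⟨u1, u2, u3, u4⟩ := hat
    exact Or.inl ⟨u1, u2, u3, u4⟩
  · obtain ⟨u1, u2, u3, u4⟩ := hrep
    simp only at u1 u2 u3 u4
    refine Or.inr (Or.inl ⟨?_, ?_, ?_, ?_⟩)
    · intro h; rw [u1] at h; exact n1 h
    · intro h; rw [u2] at h; exact n2 h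
    · intro h; rw [u3] at h; exact n3 h
    · intro h; rw [u4] at h; exact n4 h
  · obtain ⟨u1, u2⟩ := htr
    simp only at u1 u2
    refine Or.inr (Or.inr ⟨?_, ?_⟩)
    · refine u1.trans ⟨fun h hT => n4 (h.symm.trans hT), fun h => ?_⟩
      rcases aUR with h' | h'
      · exact absurd h' h
      · exact h'
    · refine u2.trans ⟨fun h hT => n3 (h.symm.trans hT), fun h => ?_⟩
      rcases aUL with h' | h'
      · exact h'
      · exact absurd h' h

lemma nodeKey (n : ℕ) (A : ℤ × ℤ → ℤ × ℤ) (hA : IsArrowField n A)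
    (P : ℤ × ℤ) (hP : InteriorNode n P) (c : ℤ × ℤ)
    (h1 : c.1 = P.1 - 1 ∨ c.1 = P.1) (h2 : c.2 = P.2 - 1 ∨ c.2 = P.2)
    (hc : A c ≠ P) (hh : A (hpart P c) = P) :
    A (vpart P c) ≠ P ∧ A (hpart P (vpart P c)) = P := by
  obtain ⟨p, q⟩ := P
  obtain ⟨cx, cy⟩ := c
  simp only at h1 h2
  have master := nodeCases n A hA p q hP
  rcases h1 with h1 | h1 <;> rcases h2 with h2 | h2 <;>
    rw [h1, h2] at hc hh ⊢
  · -- c = LL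
    rw [show hpart (p, q) ((p : ℤ) - 1, (q : ℤ) - 1) = (p, q - 1) by
          simp [hpart, Prod.ext_iff]; omega] at hh
    rw [show vpart (p, q) ((p : ℤ) - 1, (q : ℤ) - 1) = (p - 1, q) by
          simp [vpart, Prod.ext_iff]; omega,
        show hpart (p, q) ((p : ℤ) - 1, (q : ℤ)) = (p, q) by
          simp [hpart, Prod.ext_iff]; omega]
    tauto
  · -- c = UL
    rw [show hpart (p, q) ((p : ℤ) - 1, (q : ℤ)) = (p, q) by
          simp [hpart, Prod.ext_iff]; omega] at hh
    rw [show vpart (p, q) ((p : ℤ) - 1, (q : ℤ)) = (p - 1, q - 1) by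
          simp [vpart, Prod.ext_iff]; omega,
        show hpart (p, q) ((p : ℤ) - 1, (q : ℤ) - 1) = (p, q - 1) by
          simp [hpart, Prod.ext_iff]; omega]
    tauto
  · -- c = LR
    rw [show hpart (p, q) ((p : ℤ), (q : ℤ) - 1) = (p - 1, q - 1) by
          simp [hpart, Prod.ext_iff]; omega] at hh
    rw [show vpart (p, q) ((p : ℤ), (q : ℤ) - 1) = (p, q) by
          simp [vpart, Prod.ext_iff]; omega,
        show hpart (p, q) ((p : ℤ), (q : ℤ)) = (p - 1, q) by
          simp [hpart, Prod.ext_iff]; omega]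
    tauto
  · -- c = UR
    rw [show hpart (p, q) ((p : ℤ), (q : ℤ)) = (p - 1, q) by
          simp [hpart, Prod.ext_iff]; omega] at hh
    rw [show vpart (p, q) ((p : ℤ), (q : ℤ)) = (p, q - 1) by
          simp [vpart, Prod.ext_iff]; omega,
        show hpart (p, q) ((p : ℤ), (q : ℤ) - 1) = (p - 1, q - 1) by
          simp [hpart, Prod.ext_iff]; omega]
    tauto
lemma hpart_fst (P c : ℤ × ℤ) : (hpart P c).1 = 2 * P.1 - 1 - c.1 := rfl
lemma hpart_snd (P c : ℤ × ℤ) : (hpart P c).2 = c.2 := rfl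
lemma vpart_fst (P c : ℤ × ℤ) : (vpart P c).1 = c.1 := rfl
lemma vpart_snd (P c : ℤ × ℤ) : (vpart P c).2 = 2 * P.2 - 1 - c.2 := rfl

lemma tmap_spec (n : ℕ) (hn : 1 ≤ n) (A : ℤ × ℤ → ℤ × ℤ)
    (hA : IsArrowField n A) (hout : Outward n A)
    (c : ℤ × ℤ) (hc : aztecCell (n + 1) c) :
    aztecCell (n + 1) (tmap n A c) ∧ tmap n A (tmap n A c) = c ∧
      Adjacent c (tmap n A c) := by
  have hPint := pnode_interiorNode n hn A hA hout c hc
  have hpar := pnode_parity n A c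
  set P := pnode n A c with hPdef
  have hpt : aztecPoint n P := hPint.2
  have hAc := hA.1 c hc
  have hne : A c ≠ P := pnode_ne n A c hAc
  have hcorner : SqCorner c P := by
    rcases pnode_mem n A c with h | h
    · rw [hPdef, h]; exact (diag_corner n c).1
    · rw [hPdef, h]; exact (diag_corner n c).2
  have hc1 : c.1 = P.1 - 1 ∨ c.1 = P.1 := by rcases hcorner.1 with h | h <;> omega
  have hc2 : c.2 = P.2 - 1 ∨ c.2 = P.2 := by rcases hcorner.2 with h | h <;> omega
  have hcellh : aztecCell (n + 1) (hpart P c) :=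
    cell_around n P _ hpt hpar (by rw [hpart_fst]; omega) (by rw [hpart_snd]; omega)
  have hcellv : aztecCell (n + 1) (vpart P c) :=
    cell_around n P _ hpt hpar (by rw [vpart_fst]; omega) (by rw [vpart_snd]; omega)
  have hpp : hpart P (hpart P c) = c := by
    rw [Prod.ext_iff]; constructor <;> simp only [hpart_fst, hpart_snd] <;> omega
  have hvv : vpart P (vpart P c) = c := by
    rw [Prod.ext_iff]; constructor <;> simp only [vpart_fst, vpart_snd] <;> omega
  by_cases hcase : A (hpart P c) = P
  · -- vertical domino
    have htc : tmap n A c = vpart P c := by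
      unfold tmap; rw [← hPdef, if_pos hc, if_pos hcase]
    obtain ⟨hv, ho⟩ := nodeKey n A hA P hPint c hc1 hc2 hne hcase
    refine ⟨htc ▸ hcellv, ?_, ?_⟩
    · rw [htc]
      have hpv : pnode n A (vpart P c) = P :=
        pnode_eq n A (vpart P c) P (hA.1 _ hcellv)
          (mem_diag n P _ hpar (by rw [vpart_fst]; omega) (by rw [vpart_snd]; omega)) hv
      unfold tmap; rw [if_pos hcellv, hpv, if_pos ho, hvv]
    · rw [htc]; left
      refine ⟨(vpart_fst P c).symm, ?_⟩
      rw [vpart_snd]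
      have h : c.2 - (2 * P.2 - 1 - c.2) = 1 ∨ c.2 - (2 * P.2 - 1 - c.2) = -1 := by omega
      rcases h with h | h <;> rw [h] <;> norm_num
  · -- horizontal domino
    have htc : tmap n A c = hpart P c := by
      unfold tmap; rw [← hPdef, if_pos hc, if_neg hcase]
    refine ⟨htc ▸ hcellh, ?_, ?_⟩
    · rw [htc]
      have hph : pnode n A (hpart P c) = P :=
        pnode_eq n A (hpart P c) P (hA.1 _ hcellh)
          (mem_diag n P _ hpar (by rw [hpart_fst]; omega) (by rw [hpart_snd]; omega)) hcase
      unfold tmap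
      rw [if_pos hcellh, hph, hpp, if_neg hne]
    · rw [htc]; right
      refine ⟨(hpart_snd P c).symm, ?_⟩
      rw [hpart_fst]
      have h : c.1 - (2 * P.1 - 1 - c.1) = 1 ∨ c.1 - (2 * P.1 - 1 - c.1) = -1 := by omega
      rcases h with h | h <;> rw [h] <;> norm_num

lemma tilingArrow_tmap (n : ℕ) (hn : 1 ≤ n) (A : ℤ × ℤ → ℤ × ℤ)
    (hA : IsArrowField n A) (hout : Outward n A)
    (c : ℤ × ℤ) (hc : aztecCell (n + 1) c) :
    tilingArrow n (tmap n A) c = A c := by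
  have hPint := pnode_interiorNode n hn A hA hout c hc
  have hpar := pnode_parity n A c
  set P := pnode n A c with hPdef
  have hpt : aztecPoint n P := hPint.2
  have hAc := hA.1 c hc
  have hne : A c ≠ P := pnode_ne n A c hAc
  have hcorner : SqCorner c P := by
    rcases pnode_mem n A c with h | h
    · rw [hPdef, h]; exact (diag_corner n c).1
    · rw [hPdef, h]; exact (diag_corner n c).2
  have hc1 : c.1 = P.1 - 1 ∨ c.1 = P.1 := by rcases hcorner.1 with h | h <;> omega
  have hc2 : c.2 = P.2 - 1 ∨ c.2 = P.2 := by rcases hcorner.2 with h | h <;> omega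
  have hw : ((tmap n A c).1 = c.1 ∧ (tmap n A c).2 = 2 * P.2 - 1 - c.2) ∨
      ((tmap n A c).1 = 2 * P.1 - 1 - c.1 ∧ (tmap n A c).2 = c.2) := by
    unfold tmap; rw [← hPdef, if_pos hc]
    split_ifs with h
    · exact Or.inl ⟨vpart_fst _ _, vpart_snd _ _⟩
    · exact Or.inr ⟨hpart_fst _ _, hpart_snd _ _⟩
  have hd := diag_sum n c
  have hsum : (A c).1 + P.1 = 2 * c.1 + 1 ∧ (A c).2 + P.2 = 2 * c.2 + 1 := by
    rcases hAc with h | h <;> rcases pnode_mem n A c with h' | h'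
    · exact absurd (h.trans (hPdef.trans h').symm) hne
    · rw [h, hPdef, h']; exact ⟨hd.1, hd.2⟩
    · rw [h, hPdef, h']; constructor <;> omega
    · exact absurd (h.trans (hPdef.trans h').symm) hne
  rcases pnode_mem n A c with hP1 | hP1
  · -- P = diag.1, so A c = diag.2 and the arrow head is diag.2
    have hAc2 : A c = (cellDiag n c).2 := by
      rcases hAc with h | h
      · exact absurd (h.trans (hPdef.trans hP1).symm) hne
      · exact h
    have hsq : SqCorner (tmap n A c) (cellDiag n c).1 := by
      rw [← hP1, ← hPdef]
      rcases hw with ⟨e1, e2⟩ | ⟨e1, e2⟩ <;>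
        exact ⟨by rcases hc1 with h | h <;> omega, by rcases hc2 with h | h <;> omega⟩
    unfold tilingArrow; rw [if_pos hsq]; exact hAc2.symm
  · -- P = diag.2, so A c = diag.1
    have hAc1 : A c = (cellDiag n c).1 := by
      rcases hAc with h | h
      · exact h
      · exact absurd (h.trans (hPdef.trans hP1).symm) hne
    have hsq : ¬ SqCorner (tmap n A c) (cellDiag n c).1 := by
      rw [← hAc1]
      rintro ⟨H1, H2⟩
      rcases hw with ⟨e1, e2⟩ | ⟨e1, e2⟩ <;> rcases hc1 with h | h <;>
        rcases hc2 with h' | h' <;> omega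
    unfold tilingArrow; rw [if_neg hsq]; exact hAc1.symm
end Aux

/-- Every outward pointing field of arrows on `A_{n+1}` arises from some domino tiling
of `A_{n+1}`: the map `t ↦ F(t)` is surjective onto outward pointing fields. -/
theorem outward_field_surjective (n : ℕ) (hn : 1 ≤ n) (A : ℤ × ℤ → ℤ × ℤ)
    (hA : IsArrowField n A) (hout : Outward n A) :
    ∃ t : ℤ × ℤ → ℤ × ℤ, IsTiling (n + 1) t ∧
      ∀ c, aztecCell (n + 1) c → tilingArrow n t c = A c := by
  refine ⟨tmap n A, ⟨fun c hc => tmap_spec n hn A hA hout c hc,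
    fun c hc => by unfold tmap; rw [if_neg hc]⟩,
    fun c hc => tilingArrow_tmap n hn A hA hout c hc⟩
end
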